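/- Let Γ be a simple graph on a finite vertex set V, let s, t ∈ V be distinct vertices not adjacent in Γ, and let Γ ∪ e be Γ with the edge e = (s, t) added. If ℓ_s and ℓ_t are maximal cliques of Γ with s ∈ ℓ_s and t ∈ ℓ_t, and the set (ℓ_s ∩ ℓ_t) ∪ {s, t} is not properly contained in any maximal clique of Γ nor in any other set of the form (ℓ_s' ∩ ℓ_t') ∪ {s, t} with ℓ_s', ℓ_t' maximal cliques of Γ containing s and t respectively, then (ℓ_s ∩ ℓ_t) ∪ {s, t} is a maximal clique of Γ ∪ e. -/

import Mathlib

/-- A maximal clique of a simple graph: a clique not properly contained in any other clique. -/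
def IsMaxClique {V : Type*} (G : SimpleGraph V) (c : Set V) : Prop :=
  G.IsClique c ∧ ∀ d : Set V, G.IsClique d → c ⊆ d → c = d

/-!
A clique `d` of `Γ ∪ e` splits into the `Γ`-cliques `d \ {t}` and `d \ {s}`. Extending them to
maximal cliques `ℓs'`, `ℓt'` of `Γ` puts `d` inside `(ℓs' ∩ ℓt') ∪ {s, t}`, so a clique of `Γ ∪ e`
strictly containing `(ℓs ∩ ℓt) ∪ {s, t}` would contradict the hypothesis on sets of that form.
-/

open SimpleGraph

lemma isMaxClique_iff_maximal {V : Type*} {G : SimpleGraph V} {c : Set V} :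
    IsMaxClique G c ↔ Maximal G.IsClique c := by
  rw [isMaximalClique_iff]
  exact and_congr_right fun _ ↦ forall₃_congr fun d _ hcd ↦ ⟨Eq.ge, hcd.antisymm⟩

lemma exists_isMaxClique_superset {V : Type*} [Finite V] {G : SimpleGraph V} {c : Set V}
    (hc : G.IsClique c) : ∃ m, IsMaxClique G m ∧ c ⊆ m := by
  obtain ⟨m, hcm, hm⟩ := Finite.exists_le_maximal hc
  exact ⟨m, isMaxClique_iff_maximal.2 hm, hcm⟩

section InterUnionPair

variable {V : Type*} {s t : V} {A B d : Set V}

lemma inter_union_pair_diff_left_subset (ht : t ∈ B) : ((A ∩ B) ∪ {s, t}) \ {s} ⊆ B := by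
  rintro x ⟨hx | rfl | rfl, hxs⟩
  exacts [hx.2, (hxs rfl).elim, ht]

lemma inter_union_pair_diff_right_subset (hs : s ∈ A) : ((A ∩ B) ∪ {s, t}) \ {t} ⊆ A := by
  rintro x ⟨hx | rfl | rfl, hxt⟩
  exacts [hx.1, hs, (hxt rfl).elim]

lemma subset_inter_union_pair (hA : d \ {t} ⊆ A) (hB : d \ {s} ⊆ B) : d ⊆ (A ∩ B) ∪ {s, t} := by
  intro x hx
  by_cases hxs : x = s
  · exact Or.inr (Or.inl hxs)
  by_cases hxt : x = t
  · exact Or.inr (Or.inr hxt)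
  exact Or.inl ⟨hA ⟨hx, hxt⟩, hB ⟨hx, hxs⟩⟩

lemma isClique_sup_edge_inter_union_pair {G : SimpleGraph V} (hst : s ≠ t) (hA : G.IsClique A)
    (hB : G.IsClique B) (hs : s ∈ A) (ht : t ∈ B) :
    (G ⊔ edge s t).IsClique ((A ∩ B) ∪ {s, t}) :=
  (isClique_sup_edge_of_ne_iff hst).2
    ⟨hB.subset (inter_union_pair_diff_left_subset ht),
      hA.subset (inter_union_pair_diff_right_subset hs)⟩

end InterUnionPair

lemma exists_isMaxClique_subset_inter_union_pair {V : Type*} [Finite V] {G : SimpleGraph V}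
    {s t : V} {d : Set V} (hd : (G ⊔ edge s t).IsClique d) :
    ∃ ℓs ℓt, IsMaxClique G ℓs ∧ IsMaxClique G ℓt ∧ d \ {t} ⊆ ℓs ∧ d \ {s} ⊆ ℓt ∧
      d ⊆ (ℓs ∩ ℓt) ∪ {s, t} := by
  obtain ⟨ℓs, hℓs, hds⟩ := exists_isMaxClique_superset (edge_comm s t ▸ hd).sdiff_of_sup_edge
  obtain ⟨ℓt, hℓt, hdt⟩ := exists_isMaxClique_superset hd.sdiff_of_sup_edge
  exact ⟨ℓs, ℓt, hℓs, hℓt, hds, hdt, subset_inter_union_pair hds hdt⟩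

theorem statement_14_general {V : Type*} [Fintype V] (Γ : SimpleGraph V) (s t : V) (hst : s ≠ t)
    (ℓs ℓt : Set V)
    (hℓs : IsMaxClique Γ ℓs) (hℓt : IsMaxClique Γ ℓt) (hs : s ∈ ℓs) (ht : t ∈ ℓt)
    (hnot₂ : ∀ ℓs' ℓt' : Set V, IsMaxClique Γ ℓs' → IsMaxClique Γ ℓt' →
      s ∈ ℓs' → t ∈ ℓt' → ¬ (ℓs ∩ ℓt) ∪ {s, t} ⊂ (ℓs' ∩ ℓt') ∪ {s, t}) :
    IsMaxClique (Γ ⊔ SimpleGraph.edge s t) ((ℓs ∩ ℓt) ∪ {s, t}) := by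
  refine ⟨isClique_sup_edge_inter_union_pair hst hℓs.1 hℓt.1 hs ht, fun d hd hCd ↦ ?_⟩
  obtain ⟨ℓs', ℓt', hℓs', hℓt', hds, hdt, hdX⟩ := exists_isMaxClique_subset_inter_union_pair hd
  have hs' : s ∈ ℓs' := hds ⟨hCd (by simp), hst⟩
  have ht' : t ∈ ℓt' := hdt ⟨hCd (by simp), hst.symm⟩
  have hCX : (ℓs ∩ ℓt) ∪ {s, t} = (ℓs' ∩ ℓt') ∪ {s, t} :=
    eq_of_le_of_not_lt (hCd.trans hdX) (hnot₂ ℓs' ℓt' hℓs' hℓt' hs' ht')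
  exact hCd.antisymm (hCX ▸ hdX)

/-- If `ℓs ∋ s`, `ℓt ∋ t` are maximal cliques of `Γ`, and
`(ℓs ∩ ℓt) ∪ {s, t}` is not properly contained in any maximal clique of `Γ` nor in any
other set of the form `(ℓs' ∩ ℓt') ∪ {s, t}` with `ℓs' ∋ s`, `ℓt' ∋ t` maximal cliques
of `Γ`, then `(ℓs ∩ ℓt) ∪ {s, t}` is a maximal clique of `Γ ∪ e`. -/
theorem statement_14 {V : Type*} [Fintype V] (Γ : SimpleGraph V) (s t : V) (hst : s ≠ t)
    (hadj : ¬ Γ.Adj s t) (ℓs ℓt : Set V)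
    (hℓs : IsMaxClique Γ ℓs) (hℓt : IsMaxClique Γ ℓt) (hs : s ∈ ℓs) (ht : t ∈ ℓt)
    (hnot₁ : ∀ m : Set V, IsMaxClique Γ m → ¬ (ℓs ∩ ℓt) ∪ {s, t} ⊂ m)
    (hnot₂ : ∀ ℓs' ℓt' : Set V, IsMaxClique Γ ℓs' → IsMaxClique Γ ℓt' →
      s ∈ ℓs' → t ∈ ℓt' → ¬ (ℓs ∩ ℓt) ∪ {s, t} ⊂ (ℓs' ∩ ℓt') ∪ {s, t}) :
    IsMaxClique (Γ ⊔ SimpleGraph.edge s t) ((ℓs ∩ ℓt) ∪ {s, t}) :=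
  statement_14_general Γ s t hst ℓs ℓt hℓs hℓt hs ht hnot₂
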